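/- Let E be a low-defect expression with associated low-defect tree T and associated low-defect polynomial f. Then the leading coefficient of f (the coefficient of the product of all variables of f) equals the product of all the vertex labels of T. -/

import Mathlib

/-- `CpxW n k` : the positive integer `n` can be written using exactly `k` ones,
with an arbitrary combination of additions and multiplications. -/
inductive CpxW : ℕ → ℕ → Prop
  | one : CpxW 1 1
  | add {a b m n : ℕ} : CpxW a m → CpxW b n → CpxW (a + b) (m + n)
  | mul {a b m n : ℕ} : CpxW a m → CpxW b n → CpxW (a * b) (m + n)

/-- The integer complexity `‖n‖`. -/
noncomputable def cpx (n : ℕ) : ℕ := sInf {k | CpxW n k}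

/-- Low-defect expressions: built from positive integer constants (rule `const`,
positivity recorded in `LDE.WF`), products (rule `mul`, disjointness of the
variables recorded in `LDE.WF`) and `E·x + c` (rule `step`, freshness of `x`
recorded in `LDE.WF`).  Variables are indexed by natural numbers. -/
inductive LDE : Type
  | const (n : ℕ) : LDE
  | mul (E₁ E₂ : LDE) : LDE
  | step (E : LDE) (x : ℕ) (c : ℕ) : LDE

/-- The set of variables used by a low-defect expression. -/
def LDE.vars : LDE → Finset ℕ
  | .const _ => ∅
  | .mul E₁ E₂ => E₁.vars ∪ E₂.vars
  | .step E x _ => insert x E.vars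

/-- Well-formedness of a low-defect expression: constants are positive, the two
factors of a product use disjoint sets of variables, and the variable of
`E·x + c` does not occur in `E`. -/
def LDE.WF : LDE → Prop
  | .const n => 0 < n
  | .mul E₁ E₂ => E₁.WF ∧ E₂.WF ∧ Disjoint E₁.vars E₂.vars
  | .step E x c => E.WF ∧ x ∉ E.vars ∧ 0 < c

/-- The polynomial obtained by evaluating a low-defect expression. -/
noncomputable def LDE.poly : LDE → MvPolynomial ℕ ℤ
  | .const n => MvPolynomial.C (n : ℤ)
  | .mul E₁ E₂ => E₁.poly * E₂.poly
  | .step E x c => E.poly * MvPolynomial.X x + MvPolynomial.C (c : ℤ)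

/-- The complexity `‖E‖` of a low-defect expression. -/
noncomputable def LDE.cpx : LDE → ℕ
  | .const n => _root_.cpx n
  | .mul E₁ E₂ => E₁.cpx + E₂.cpx
  | .step E _ c => E.cpx + _root_.cpx c

/-- Low-defect trees: rooted trees whose vertices and edges are labeled by
natural numbers (positivity of the labels is recorded in `LDT.Pos`); a node
carries its label together with the list of its subtrees, each with the label of
the corresponding edge. -/
inductive LDT : Type
  | node (label : ℕ) (children : List (ℕ × LDT)) : LDT

/-- The label of the root. -/
def LDT.label : LDT → ℕ | .node n _ => n

/-- The children (edge label, subtree) of the root. -/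
def LDT.children : LDT → List (ℕ × LDT) | .node _ cs => cs

mutual
/-- All labels of a low-defect tree are positive. -/
def LDT.Pos : LDT → Prop
  | .node n cs => 0 < n ∧ LDT.PosAux cs

def LDT.PosAux : List (ℕ × LDT) → Prop
  | [] => True
  | c :: cs => 0 < c.1 ∧ c.2.Pos ∧ LDT.PosAux cs
end

/-- Isomorphism of labeled rooted trees: a root-preserving, label-preserving
graph isomorphism; concretely, the root labels agree and the children lists
match up to a permutation, recursively. -/
inductive LDT.Iso : LDT → LDT → Prop
  | node (n : ℕ) (cs₁ cs₂ : List (ℕ × LDT)) (σ : Fin cs₁.length ≃ Fin cs₂.length)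
      (hlab : ∀ i : Fin cs₁.length, (cs₁.get i).1 = (cs₂.get (σ i)).1)
      (hiso : ∀ i : Fin cs₁.length, LDT.Iso (cs₁.get i).2 (cs₂.get (σ i)).2) :
      LDT.Iso (.node n cs₁) (.node n cs₂)

/-- The low-defect tree `T(E)` associated to a low-defect expression `E`. -/
def LDE.tree : LDE → LDT
  | .const n => .node n []
  | .step E _ c => .node 1 [(c, E.tree)]
  | .mul E₁ E₂ => .node (E₁.tree.label * E₂.tree.label) (E₁.tree.children ++ E₂.tree.children)

/-- The subtree of a low-defect tree at a position (a path from the root, given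
by the list of child indices); `none` if there is no such vertex. -/
def LDT.sub? : LDT → List ℕ → Option LDT
  | t, [] => some t
  | t, i :: p =>
    match t.children[i]? with
    | some c => LDT.sub? c.2 p
    | none => none

/-- `p` is a vertex of `t` (vertices are encoded by their positions). -/
def LDT.IsVert (t : LDT) (p : List ℕ) : Prop := (t.sub? p).isSome

/-- The label of the vertex at position `p` (junk value `1` if `p` is not a
vertex). -/
def LDT.labelAt (t : LDT) (p : List ℕ) : ℕ := ((t.sub? p).map LDT.label).getD 1

/-- The list of children at position `p`. -/
def LDT.childrenAt (t : LDT) (p : List ℕ) : List (ℕ × LDT) :=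
  ((t.sub? p).map LDT.children).getD []

/-- The label of the edge joining the non-root vertex at position `q` to its
parent (junk value `1` if there is no such edge). -/
def LDT.edgeLabelAt (t : LDT) (q : List ℕ) : ℕ :=
  (((t.sub? q.dropLast).bind (fun s => s.children[q.getLast?.getD 0]?)).map
    Prod.fst).getD 1

mutual
/-- The list of all positions (vertices) of a low-defect tree. -/
def LDT.positions : LDT → List (List ℕ)
  | .node _ cs => [] :: LDT.positionsAux 0 cs

def LDT.positionsAux : ℕ → List (ℕ × LDT) → List (List ℕ)
  | _, [] => []
  | i, c :: cs => (c.2.positions.map (i :: ·)) ++ LDT.positionsAux (i + 1) cs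
end

/-- The finite set of vertices (positions) of a low-defect tree. -/
def LDT.vertFinset (t : LDT) : Finset (List ℕ) := t.positions.toFinset

/-- The finite set of edges of a low-defect tree, an edge being encoded by the
position of its lower (non-root) endpoint. -/
def LDT.edgeFinset (t : LDT) : Finset (List ℕ) := t.positions.toFinset.erase []

/-- The variable of `E` corresponding to the non-root vertex of `T(E)` at a given
position, under the canonical bijection between variables of `E` and non-root
vertices of `T(E)`. -/
def LDE.varAt : LDE → List ℕ → Option ℕ
  | .const _, _ => none
  | .step E x _, p =>
    match p with
    | 0 :: p' => if p' = [] then some x else E.varAt p'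
    | _ => none
  | .mul E₁ E₂, p =>
    match p with
    | i :: p' =>
      if i < E₁.tree.children.length then E₁.varAt (i :: p')
      else E₂.varAt ((i - E₁.tree.children.length) :: p')
    | [] => none

/-- The position of the non-root vertex of `T(E)` corresponding to a variable of
`E`, under the canonical bijection. -/
def LDE.posOf : LDE → ℕ → Option (List ℕ)
  | .const _, _ => none
  | .step E v _, x => if x = v then some [0] else (E.posOf x).map (0 :: ·)
  | .mul E₁ E₂, x =>
    match E₁.posOf x with
    | some p => some p
    | none => (E₂.posOf x).map (fun p =>
        match p with
        | i :: p' => (i + E₁.tree.children.length) :: p'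
        | [] => [])

/-! Both sides are computed by induction on `E`. The product of the vertex labels of
`T(E)` is multiplicative under merging roots and unchanged when a new root labelled `1`
is added. On the polynomial side, the top monomial `∏_{x ∈ vars E} x` of a product of
polynomials in disjoint sets of variables splits in only one way, so its coefficient is
multiplicative too; and in `E·x + c` the fresh variable `x` keeps the constant `c` away
from the top monomial. -/

open MvPolynomial

mutual
def LDT.labelProd : LDT → ℕ
  | .node n cs => n * LDT.labelProdAux cs

def LDT.labelProdAux : List (ℕ × LDT) → ℕ
  | [] => 1
  | (_, t) :: cs => t.labelProd * LDT.labelProdAux cs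
end

namespace LDT

lemma labelProd_eq_label_mul (t : LDT) : t.labelProd = t.label * labelProdAux t.children := by
  cases t; rfl

lemma labelProdAux_append (cs₁ cs₂ : List (ℕ × LDT)) :
    labelProdAux (cs₁ ++ cs₂) = labelProdAux cs₁ * labelProdAux cs₂ := by
  induction cs₁ with
  | nil => simp [labelProdAux]
  | cons c cs ih =>
    obtain ⟨e, t⟩ := c
    simp only [List.cons_append, labelProdAux, ih, mul_assoc]

lemma labelAt_nil (t : LDT) : t.labelAt [] = t.label := by
  simp [labelAt, sub?]

lemma labelAt_cons {t : LDT} {i : ℕ} {c : ℕ × LDT} (h : t.children[i]? = some c)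
    (p : List ℕ) : t.labelAt (i :: p) = c.2.labelAt p := by
  simp [labelAt, sub?, h]

lemma exists_eq_cons_of_mem_positionsAux {cs : List (ℕ × LDT)} {i : ℕ} {p : List ℕ}
    (hp : p ∈ positionsAux i cs) : ∃ j, i ≤ j ∧ ∃ p', p = j :: p' := by
  induction cs generalizing i with
  | nil => simp [positionsAux] at hp
  | cons c cs ih =>
    simp only [positionsAux, List.mem_append, List.mem_map] at hp
    rcases hp with ⟨q, _, rfl⟩ | hp
    · exact ⟨i, le_rfl, q, rfl⟩
    · obtain ⟨j, hij, p', rfl⟩ := ih hp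
      exact ⟨j, by omega, p', rfl⟩

mutual
theorem nodup_positions : ∀ t : LDT, t.positions.Nodup
  | .node _ cs => by
    refine List.nodup_cons.2 ⟨fun h => ?_, nodup_positionsAux cs 0⟩
    obtain ⟨_, _, _, h⟩ := exists_eq_cons_of_mem_positionsAux h
    cases h

theorem nodup_positionsAux : ∀ (cs : List (ℕ × LDT)) (i : ℕ), (positionsAux i cs).Nodup
  | [], _ => List.nodup_nil
  | c :: cs, i => by
    refine List.Nodup.append ((nodup_positions c.2).map fun _ _ h => List.cons_injective h)
      (nodup_positionsAux cs (i + 1)) ?_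
    rintro p hp₁ hp₂
    obtain ⟨q, _, rfl⟩ := List.mem_map.1 hp₁
    obtain ⟨j, hij, p', h⟩ := exists_eq_cons_of_mem_positionsAux hp₂
    cases h
    omega
end

mutual
theorem prod_map_labelAt_positions : ∀ t : LDT, (t.positions.map t.labelAt).prod = t.labelProd
  | .node n cs => by
    rw [positions, List.map_cons, List.prod_cons, labelAt_nil, labelProd,
      prod_map_labelAt_positionsAux cs 0 (.node n cs) rfl]
    rfl

theorem prod_map_labelAt_positionsAux : ∀ (cs : List (ℕ × LDT)) (i : ℕ) (t : LDT),
    t.children.drop i = cs → ((positionsAux i cs).map t.labelAt).prod = labelProdAux cs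
  | [], _, _, _ => rfl
  | (e, s) :: cs, i, t, h => by
    have hi : t.children[i]? = some (e, s) := by
      rw [← Nat.add_zero i, ← List.getElem?_drop, h]; rfl
    have hrest : t.children.drop (i + 1) = cs := by
      rw [← List.drop_drop, h]; rfl
    have hsub : t.labelAt ∘ (i :: ·) = s.labelAt := funext (labelAt_cons hi)
    rw [positionsAux, List.map_append, List.prod_append, List.map_map, hsub,
      prod_map_labelAt_positions s, prod_map_labelAt_positionsAux cs (i + 1) t hrest]
    rfl
end

lemma prod_vertFinset_labelAt (t : LDT) : ∏ p ∈ t.vertFinset, t.labelAt p = t.labelProd := by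
  rw [vertFinset, List.prod_toFinset _ (nodup_positions t), prod_map_labelAt_positions]

end LDT

lemma Finsupp.support_sum_single_subset {σ M : Type*} [AddCommMonoid M] (s : Finset σ)
    (m : σ → M) : (∑ x ∈ s, Finsupp.single x (m x)).support ⊆ s := fun x hx => by
  obtain ⟨y, hy, hxy⟩ := Finsupp.mem_support_finsetSum x hx
  rwa [Finset.mem_singleton.1 (Finsupp.support_single_subset hxy)]

lemma Finsupp.filter_mem_add_of_support_subset {σ M : Type*} [DecidableEq σ] [AddZeroClass M]
    {s t : Finset σ} (hst : Disjoint s t) {u v : σ →₀ M} (hu : u.support ⊆ s)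
    (hv : v.support ⊆ t) : (u + v).filter (· ∈ s) = u := by
  rw [Finsupp.filter_add, (Finsupp.filter_eq_self_iff _ u).2, (Finsupp.filter_eq_zero_iff _ v).2,
    add_zero]
  · exact fun x hx => Finsupp.notMem_support_iff.1 fun h => Finset.disjoint_left.1 hst hx (hv h)
  · exact fun x hx => hu (Finsupp.mem_support_iff.2 hx)

lemma MvPolynomial.coeff_sum_single_mul_of_vars_disjoint {R σ : Type*} [CommSemiring R]
    [DecidableEq σ] {f g : MvPolynomial σ R} {s t : Finset σ} (hf : f.vars ⊆ s) (hg : g.vars ⊆ t)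
    (hst : Disjoint s t) :
    coeff (∑ x ∈ s ∪ t, Finsupp.single x 1) (f * g) =
      coeff (∑ x ∈ s, Finsupp.single x 1) f * coeff (∑ x ∈ t, Finsupp.single x 1) g := by
  rw [Finset.sum_union hst, coeff_mul]
  set ds : σ →₀ ℕ := ∑ x ∈ s, Finsupp.single x 1
  set dt : σ →₀ ℕ := ∑ x ∈ t, Finsupp.single x 1
  have hds : ds.support ⊆ s := Finsupp.support_sum_single_subset s _
  have hdt : dt.support ⊆ t := Finsupp.support_sum_single_subset t _
  refine Finset.sum_eq_single (ds, dt) (fun b hb hne => ?_) (by simp)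
  rw [Finset.HasAntidiagonal.mem_antidiagonal] at hb
  by_contra h
  have hb₁ : b.1.support ⊆ s :=
    (support_subset_vars_of_mem_support (mem_support_iff.2 (left_ne_zero_of_mul h))).trans hf
  have hb₂ : b.2.support ⊆ t :=
    (support_subset_vars_of_mem_support (mem_support_iff.2 (right_ne_zero_of_mul h))).trans hg
  -- `b.1` and `ds` are both the part of `b.1 + b.2 = ds + dt` supported on `s`; same for `t`
  refine hne (Prod.ext ?_ ?_)
  · rw [← Finsupp.filter_mem_add_of_support_subset hst hb₁ hb₂, hb,
      Finsupp.filter_mem_add_of_support_subset hst hds hdt]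
  · rw [← Finsupp.filter_mem_add_of_support_subset hst.symm hb₂ hb₁, add_comm b.2, hb,
      add_comm ds, Finsupp.filter_mem_add_of_support_subset hst.symm hdt hds]

namespace LDE

lemma vars_poly_subset (E : LDE) : E.poly.vars ⊆ E.vars := by
  induction E with
  | const n => exact vars_C.subset
  | mul E₁ E₂ ih₁ ih₂ => exact (vars_mul _ _).trans (Finset.union_subset_union ih₁ ih₂)
  | step E x c ih =>
    refine (vars_add_subset _ _).trans ?_
    rw [vars_C, Finset.union_empty]
    refine (vars_mul _ _).trans (Finset.union_subset (ih.trans (Finset.subset_insert _ _)) ?_)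
    simp [vars_X, vars]

lemma labelProd_tree_mul (E₁ E₂ : LDE) :
    (mul E₁ E₂).tree.labelProd = E₁.tree.labelProd * E₂.tree.labelProd := by
  rw [tree, LDT.labelProd, LDT.labelProdAux_append, LDT.labelProd_eq_label_mul E₁.tree,
    LDT.labelProd_eq_label_mul E₂.tree]
  ring

lemma labelProd_tree_step (E : LDE) (x c : ℕ) :
    (step E x c).tree.labelProd = E.tree.labelProd := by
  simp [tree, LDT.labelProd, LDT.labelProdAux]

theorem coeff_sum_vars_poly (E : LDE) (hE : E.WF) :
    coeff (∑ x ∈ E.vars, Finsupp.single x 1) E.poly = E.tree.labelProd := by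
  induction E with
  | const n =>
    rw [vars, poly, Finset.sum_empty, coeff_zero_C]
    simp [tree, LDT.labelProd, LDT.labelProdAux]
  | mul E₁ E₂ ih₁ ih₂ =>
    obtain ⟨h₁, h₂, hdisj⟩ := hE
    rw [labelProd_tree_mul, vars, poly, coeff_sum_single_mul_of_vars_disjoint
      E₁.vars_poly_subset E₂.vars_poly_subset hdisj, ih₁ h₁, ih₂ h₂, Nat.cast_mul]
  | step E x c ih =>
    obtain ⟨hwf, hx, -⟩ := hE
    have htop : Finsupp.single x 1 + ∑ y ∈ E.vars, Finsupp.single y 1 ≠ 0 :=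
      fun h => by simpa using DFunLike.congr_fun h x
    rw [labelProd_tree_step, vars, poly, Finset.sum_insert hx, coeff_add,
      coeff_C, if_neg (Ne.symm htop), add_zero, add_comm, coeff_mul_X, ih hwf]

end LDE

/-- The leading coefficient of the polynomial of a low-defect
expression `E` (the coefficient of the product of all its variables) equals the
product of all the vertex labels of `T(E)`. -/
theorem leading_coeff_eq_prod_vertex_labels (E : LDE) (hE : E.WF) :
    MvPolynomial.coeff (∑ x ∈ E.vars, Finsupp.single x 1) E.poly =
      (∏ p ∈ E.tree.vertFinset, (E.tree.labelAt p) : ℕ) := by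
  rw [LDT.prod_vertFinset_labelAt]
  exact E.coeff_sum_vars_poly hE
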